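/- arXiv:2111.15059 — 3 statements merged into one kernel-verified Lean document; each statement's English description precedes it below -/
import Mathlib

section
/- Let g2, g3 ∈ ℂ and let p1, p2, p3 ∈ ℂ be pairwise distinct. Suppose there exists ℧ ∈ ℂ such that 4·p1³ − g2·p1 − g3 = ℧·(p2 − p3)², 4·p2³ − g2·p2 − g3 = ℧·(p1 − p3)², and 4·p3³ − g2·p3 − g3 = ℧·(p1 − p2)². Let s1 = p1 + p2 + p3, s2 = p1·p2 + p1·p3 + p2·p3, s3 = p1·p2·p3. Then ℧ = −(4/3)·s1, s2 = (2/3)·s1² − (1/4)·g2, and s3 = (5/9)·s1³ − (1/3)·g2·s1 + (1/4)·g3. -/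
/-!
Subtracting two of the equations and dividing by the difference of the corresponding `pᵢ`
gives, for each pair, a relation that is linear in `℧` and `g2`. Eliminating `g2` between two
of these relations and dividing by the third difference forces `3 ℧ + 4 s1 = 0`; either
relation then determines `s2`, and the sum of the three equations determines `s3`.
-/

section CubicSystem

variable {R : Type*} [CommRing R] {g2 g3 p1 p2 p3 mho : R}

theorem three_mul_add_four_mul_sum_eq_zero [IsDomain R]
    (h12 : p1 ≠ p2) (h13 : p1 ≠ p3) (h23 : p2 ≠ p3)
    (h1 : 4 * p1 ^ 3 - g2 * p1 - g3 = mho * (p2 - p3) ^ 2)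
    (h2 : 4 * p2 ^ 3 - g2 * p2 - g3 = mho * (p1 - p3) ^ 2)
    (h3 : 4 * p3 ^ 3 - g2 * p3 - g3 = mho * (p1 - p2) ^ 2) :
    3 * mho + 4 * (p1 + p2 + p3) = 0 := by
  have vandermonde : (p1 - p2) * (p1 - p3) * (p2 - p3) * (3 * mho + 4 * (p1 + p2 + p3)) = 0 := by
    linear_combination ((p1 - p3) - (p1 - p2)) * h1 - (p1 - p3) * h2 + (p1 - p2) * h3
  simpa [sub_eq_zero, h12, h13, h23] using vandermonde

theorem twelve_mul_esymm_two_eq [IsDomain R]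
    (h12 : p1 ≠ p2)
    (h1 : 4 * p1 ^ 3 - g2 * p1 - g3 = mho * (p2 - p3) ^ 2)
    (h2 : 4 * p2 ^ 3 - g2 * p2 - g3 = mho * (p1 - p3) ^ 2)
    (hmho : 3 * mho + 4 * (p1 + p2 + p3) = 0) :
    12 * (p1 * p2 + p1 * p3 + p2 * p3) = 8 * (p1 + p2 + p3) ^ 2 - 3 * g2 := by
  have factored : (p1 - p2) * (12 * (p1 * p2 + p1 * p3 + p2 * p3) - 8 * (p1 + p2 + p3) ^ 2 + 3 * g2)
      = 0 := by
    linear_combination 3 * (h2 - h1) + (p1 - p2) * (p1 + p2 - 2 * p3) * hmho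
  linear_combination (mul_eq_zero.mp factored).resolve_left (sub_ne_zero.mpr h12)

theorem thirty_six_mul_esymm_three_eq
    (h1 : 4 * p1 ^ 3 - g2 * p1 - g3 = mho * (p2 - p3) ^ 2)
    (h2 : 4 * p2 ^ 3 - g2 * p2 - g3 = mho * (p1 - p3) ^ 2)
    (h3 : 4 * p3 ^ 3 - g2 * p3 - g3 = mho * (p1 - p2) ^ 2)
    (hmho : 3 * mho + 4 * (p1 + p2 + p3) = 0)
    (hs2 : 12 * (p1 * p2 + p1 * p3 + p2 * p3) = 8 * (p1 + p2 + p3) ^ 2 - 3 * g2) :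
    36 * (p1 * p2 * p3) = 20 * (p1 + p2 + p3) ^ 3 - 12 * g2 * (p1 + p2 + p3) + 9 * g3 := by
  linear_combination 3 * (h1 + h2 + h3) +
    2 * ((p1 + p2 + p3) ^ 2 - 3 * (p1 * p2 + p1 * p3 + p2 * p3)) * hmho + 5 * (p1 + p2 + p3) * hs2

end CubicSystem

theorem stmt_4 (g2 g3 p1 p2 p3 mho : ℂ)
    (h12 : p1 ≠ p2) (h13 : p1 ≠ p3) (h23 : p2 ≠ p3)
    (h1 : 4 * p1 ^ 3 - g2 * p1 - g3 = mho * (p2 - p3) ^ 2)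
    (h2 : 4 * p2 ^ 3 - g2 * p2 - g3 = mho * (p1 - p3) ^ 2)
    (h3 : 4 * p3 ^ 3 - g2 * p3 - g3 = mho * (p1 - p2) ^ 2)
    (s1 s2 s3 : ℂ)
    (hs1 : s1 = p1 + p2 + p3)
    (hs2 : s2 = p1 * p2 + p1 * p3 + p2 * p3)
    (hs3 : s3 = p1 * p2 * p3) :
    mho = -(4 / 3) * s1 ∧
    s2 = (2 / 3) * s1 ^ 2 - (1 / 4) * g2 ∧
    s3 = (5 / 9) * s1 ^ 3 - (1 / 3) * g2 * s1 + (1 / 4) * g3 := by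
  subst hs1 hs2 hs3
  have hmho := three_mul_add_four_mul_sum_eq_zero h12 h13 h23 h1 h2 h3
  have he2 := twelve_mul_esymm_two_eq h12 h1 h2 hmho
  have he3 := thirty_six_mul_esymm_three_eq h1 h2 h3 hmho he2
  refine ⟨?_, ?_, ?_⟩
  · linear_combination (1 / 3) * hmho
  · linear_combination (1 / 12) * he2
  · linear_combination (1 / 36) * he3
end

section
/- Let e1 ∈ ℝ, η1 ∈ ℝ, g2 ∈ ℝ with g2 < 3·e1², 5·g2 − 12·e1² > 0, and e1² − 4·e1·η1 − (5/12)·g2 ≠ 0. Set g3 = 4·e1³ − e1·g2, let ϑ± = 3·e1 ± (1/2)·√(12·(5g2 − 12e1²)) be the roots of R1(λ) = λ² − 6e1λ + 15(3e1² − g2), and let f(λ) = (4/15)λ³ + (8/5)η1λ² − 3g2λ + 9g3 − 6η1g2. Then f(ϑ−)·f(ϑ+) = (3·B²·(5g2 − 12e1²) / (4·(e1² − 4e1η1 − (5/12)g2)²)) · (3·(5g2 − 12e1²)·(e1 + η1)² − 4·(e1² − 4e1η1 − (5/12)g2)²), where B = g2 + (48/5)·η1·e1 − (12/5)·e1². 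-/
/-! The two values `ϑ∓` enter only through their sum `6 e1` and product `15 (3 e1² - g2)`, and
`f(ϑ-) f(ϑ+)` is symmetric in them, so it is a polynomial in `e1`, `η1`, `g2`; after clearing the
denominator the claim is a polynomial identity. -/

lemma add_eq_and_mul_eq_of_eq_sub_sqrt_of_eq_add_sqrt {a D x y : ℝ} (hD : 0 ≤ D)
    (hx : x = a - (1 / 2) * Real.sqrt D) (hy : y = a + (1 / 2) * Real.sqrt D) :
    x + y = 2 * a ∧ x * y = a ^ 2 - D / 4 := by
  have hsq : Real.sqrt D ^ 2 = D := Real.sq_sqrt hD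
  subst hx hy
  constructor
  · ring
  · linear_combination (-1 / 4 : ℝ) * hsq

lemma mul_eq_of_cubic_of_add_eq_of_mul_eq {R : Type*} [CommRing R] {f : R → R}
    {a b c d x y s p : R} (hf : ∀ t, f t = a * t ^ 3 + b * t ^ 2 + c * t + d)
    (hs : x + y = s) (hp : x * y = p) :
    f x * f y =
      a ^ 2 * p ^ 3 + a * b * p ^ 2 * s + a * c * p * (s ^ 2 - 2 * p)
        + a * d * (s ^ 3 - 3 * p * s) + b ^ 2 * p ^ 2 + b * c * p * s
        + b * d * (s ^ 2 - 2 * p) + c ^ 2 * p + c * d * s + d ^ 2 := by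
  subst hs hp
  rw [hf, hf]
  ring

theorem stmt_13_general (e1 eta1 g2 g3 : ℝ)
    (hdisc : 0 < 5 * g2 - 12 * e1 ^ 2)
    (hden : e1 ^ 2 - 4 * e1 * eta1 - (5 / 12) * g2 ≠ 0)
    (hg3 : g3 = 4 * e1 ^ 3 - e1 * g2)
    (ϑm ϑp : ℝ)
    (hm : ϑm = 3 * e1 - (1 / 2) * Real.sqrt (12 * (5 * g2 - 12 * e1 ^ 2)))
    (hp : ϑp = 3 * e1 + (1 / 2) * Real.sqrt (12 * (5 * g2 - 12 * e1 ^ 2)))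
    (f : ℝ → ℝ)
    (hf : f = fun lam =>
      (4 / 15) * lam ^ 3 + (8 / 5) * eta1 * lam ^ 2 - 3 * g2 * lam
        + 9 * g3 - 6 * eta1 * g2)
    (B : ℝ) (hB : B = g2 + (48 / 5) * eta1 * e1 - (12 / 5) * e1 ^ 2) :
    f ϑm * f ϑp =
      (3 * B ^ 2 * (5 * g2 - 12 * e1 ^ 2)
          / (4 * (e1 ^ 2 - 4 * e1 * eta1 - (5 / 12) * g2) ^ 2)) *
        (3 * (5 * g2 - 12 * e1 ^ 2) * (e1 + eta1) ^ 2
          - 4 * (e1 ^ 2 - 4 * e1 * eta1 - (5 / 12) * g2) ^ 2) := by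
  obtain ⟨hsum, hprod⟩ :=
    add_eq_and_mul_eq_of_eq_sub_sqrt_of_eq_add_sqrt (by positivity) hm hp
  have hf_cubic (t : ℝ) :
      f t = (4 / 15) * t ^ 3 + (8 / 5 * eta1) * t ^ 2 + (-3 * g2) * t + (9 * g3 - 6 * eta1 * g2) := by
    subst hf
    ring
  rw [mul_eq_of_cubic_of_add_eq_of_mul_eq hf_cubic hsum hprod, eq_comm, div_mul_eq_mul_div,
    div_eq_iff (by positivity), hg3, hB]
  ring

theorem stmt_13 (e1 eta1 g2 g3 : ℝ)
    (hlt : g2 < 3 * e1 ^ 2)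
    (hdisc : 0 < 5 * g2 - 12 * e1 ^ 2)
    (hden : e1 ^ 2 - 4 * e1 * eta1 - (5 / 12) * g2 ≠ 0)
    (hg3 : g3 = 4 * e1 ^ 3 - e1 * g2)
    (ϑm ϑp : ℝ)
    (hm : ϑm = 3 * e1 - (1 / 2) * Real.sqrt (12 * (5 * g2 - 12 * e1 ^ 2)))
    (hp : ϑp = 3 * e1 + (1 / 2) * Real.sqrt (12 * (5 * g2 - 12 * e1 ^ 2)))
    (f : ℝ → ℝ)
    (hf : f = fun lam =>
      (4 / 15) * lam ^ 3 + (8 / 5) * eta1 * lam ^ 2 - 3 * g2 * lam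
        + 9 * g3 - 6 * eta1 * g2)
    (B : ℝ) (hB : B = g2 + (48 / 5) * eta1 * e1 - (12 / 5) * e1 ^ 2) :
    f ϑm * f ϑp =
      (3 * B ^ 2 * (5 * g2 - 12 * e1 ^ 2)
          / (4 * (e1 ^ 2 - 4 * e1 * eta1 - (5 / 12) * g2) ^ 2)) *
        (3 * (5 * g2 - 12 * e1 ^ 2) * (e1 + eta1) ^ 2
          - 4 * (e1 ^ 2 - 4 * e1 * eta1 - (5 / 12) * g2) ^ 2) :=
  stmt_13_general e1 eta1 g2 g3 hdisc hden hg3 ϑm ϑp hm hp f hf B hB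
end

section
/- Let e1, e2, e3, g2 ∈ ℂ satisfy e1 + e2 + e3 = 0 and g2 = 2(e1² + e2² + e3²), with e1, e2, e3 pairwise distinct. Then for each k ∈ {1, 2, 3}, R_k(0) = 15·(3·e_k² − g2) ≠ 0; consequently 0 is a simple root of the genus-3 Lamé spectral polynomial Q3(λ) = λ·∏_{k=1}^{3}(λ² − 6·e_k·λ + 15·(3·e_k² − g2)). -/
/-! Since `e₁ + e₂ + e₃ = 0`, the constant term `R_k(0) = 15 (3 e_k² − g₂)` equals `−15 (e_i − e_j)²`
for `{i, j, k} = {1, 2, 3}`, which is nonzero because the `e`'s are distinct. As `Q₃ = λ · R₁R₂R₃`,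
its derivative at `0` is `R₁(0) R₂(0) R₃(0) ≠ 0`. -/

theorem three_mul_sq_sub_two_mul_sum_sq {R : Type*} [CommRing R] {a b c : R}
    (h : a + b + c = 0) : 3 * a ^ 2 - 2 * (a ^ 2 + b ^ 2 + c ^ 2) = -(b - c) ^ 2 := by
  linear_combination (a - b - c) * h

theorem lame_constant_term_ne_zero {K : Type*} [Field K] [CharZero K] {a b c g : K}
    (h : a + b + c = 0) (hg : g = 2 * (a ^ 2 + b ^ 2 + c ^ 2)) (hbc : b ≠ c) :
    15 * (3 * a ^ 2 - g) ≠ 0 := by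
  rw [hg, three_mul_sq_sub_two_mul_sum_sq h]
  simpa [sub_eq_zero] using hbc

theorem deriv_id_mul_at_zero {𝕜 : Type*} [NontriviallyNormedField 𝕜] {f : 𝕜 → 𝕜}
    (hf : DifferentiableAt 𝕜 f 0) : deriv (fun x => x * f x) 0 = f 0 := by
  rw [deriv_fun_mul differentiableAt_fun_id hf]
  simp

theorem stmt_14 (e1 e2 e3 g2 : ℂ)
    (h12 : e1 ≠ e2) (h13 : e1 ≠ e3) (h23 : e2 ≠ e3)
    (hsum : e1 + e2 + e3 = 0)
    (hg2 : g2 = 2 * (e1 ^ 2 + e2 ^ 2 + e3 ^ 2))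
    (Q3 : ℂ → ℂ)
    (hQ3 : Q3 = fun lam => lam *
      ((lam ^ 2 - 6 * e1 * lam + 15 * (3 * e1 ^ 2 - g2)) *
       ((lam ^ 2 - 6 * e2 * lam + 15 * (3 * e2 ^ 2 - g2)) *
        (lam ^ 2 - 6 * e3 * lam + 15 * (3 * e3 ^ 2 - g2))))) :
    15 * (3 * e1 ^ 2 - g2) ≠ 0 ∧
    15 * (3 * e2 ^ 2 - g2) ≠ 0 ∧
    15 * (3 * e3 ^ 2 - g2) ≠ 0 ∧
    Q3 0 = 0 ∧ deriv Q3 0 ≠ 0 := by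
  have hR1 : 15 * (3 * e1 ^ 2 - g2) ≠ 0 := lame_constant_term_ne_zero hsum hg2 h23
  have hR2 : 15 * (3 * e2 ^ 2 - g2) ≠ 0 :=
    lame_constant_term_ne_zero (b := e1) (c := e3) (by linear_combination hsum)
      (by rw [hg2]; ring) h13
  have hR3 : 15 * (3 * e3 ^ 2 - g2) ≠ 0 :=
    lame_constant_term_ne_zero (b := e1) (c := e2) (by linear_combination hsum)
      (by rw [hg2]; ring) h12
  refine ⟨hR1, hR2, hR3, by simp [hQ3], ?_⟩
  rw [hQ3, deriv_id_mul_at_zero (by fun_prop)]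
  convert mul_ne_zero hR1 (mul_ne_zero hR2 hR3) using 1
  ring
end
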